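/- Let g = (√5−1)/2, G = (√5+1)/2, and g ≤ α ≤ 1. Define h_α(x) = (3 log G)^{−1} times: 1/(x+G+1) for x ∈ [α−2, (α−1)/(2−α)); 1/(x+G+1) + 1/(x+G−1) − 1/(x+1) for x ∈ [(α−1)/(2−α), (1−α)/α); and 1/(x+G−1) for x ∈ [(1−α)/α, α). Then ∫_{α−2}^{α} h_α(x) dx = 1. -/

import Mathlib

/-!
On the three pieces of `[α - 2, α)` the density is a combination of `(x + φ + 1)⁻¹`,
`(x + φ - 1)⁻¹` and `(x + 1)⁻¹`, so its integral is a sum of logarithms. Because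
`(α - 2) + (φ + 1) = α + (φ - 1)`, these telescope to
`log ((b + φ + 1) / (b + 1)) - log ((a + φ - 1) / (a + 1))` with `a = (α - 1)/(2 - α)` and
`b = (1 - α)/α`, and the identities `b + φ + 1 = φ (α + φ - 1) (b + 1)` and
`a + φ - 1 = φ⁻² (α + φ - 1) (a + 1)`, consequences of `φ² = φ + 1`, turn this into `log φ³`.
The lower bound `φ - 1 ≤ α` is what places the breakpoint `b` inside `[α - 2, α]`.
-/

/-- The invariant density h_α for g ≤ α ≤ 1. -/
noncomputable def hDen (α x : ℝ) : ℝ :=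
  let G : ℝ := (Real.sqrt 5 + 1)/2
  (3 * Real.log G)⁻¹ *
    (if x < (α-1)/(2-α) then 1/(x+G+1)
     else if x < (1-α)/α then 1/(x+G+1) + 1/(x+G-1) - 1/(x+1)
     else 1/(x+G-1))

open Real MeasureTheory Set intervalIntegral
open scoped goldenRatio

section Piecewise

variable {E : Type*} [NormedAddCommGroup E] [NormedSpace ℝ E] {μ : Measure ℝ}
  [NullSingletonClass μ] {f g k : ℝ → E} {l a b r : ℝ}

theorem intervalIntegral_ite_ite (hla : l ≤ a) (hab : a ≤ b) (hbr : b ≤ r)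
    (hf : IntervalIntegrable f μ l a) (hg : IntervalIntegrable g μ a b)
    (hk : IntervalIntegrable k μ b r) :
    ∫ x in l..r, (if x < a then f x else if x < b then g x else k x) ∂μ =
      (∫ x in l..a, f x ∂μ) + (∫ x in a..b, g x ∂μ) + ∫ x in b..r, k x ∂μ := by
  set F : ℝ → E := fun x => if x < a then f x else if x < b then g x else k x
  have hF₁ : EqOn F f (Ioo l a) := fun x hx => if_pos hx.2
  have hF₂ : EqOn F g (Ioo a b) := fun x hx => by
    simp only [F, if_neg hx.1.not_gt, if_pos hx.2]
  have hF₃ : EqOn F k (Ioo b r) := fun x hx => by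
    simp only [F, if_neg (hab.trans_lt hx.1).not_gt, if_neg hx.1.not_gt]
  have hF₁' : IntervalIntegrable F μ l a := hf.congr_uIoo (uIoo_of_le hla ▸ hF₁.symm)
  have hF₂' : IntervalIntegrable F μ a b := hg.congr_uIoo (uIoo_of_le hab ▸ hF₂.symm)
  have hF₃' : IntervalIntegrable F μ b r := hk.congr_uIoo (uIoo_of_le hbr ▸ hF₃.symm)
  rw [← integral_add_adjacent_intervals (hF₁'.trans hF₂') hF₃',
    ← integral_add_adjacent_intervals hF₁' hF₂', integral_congr_Ioo_of_le hla hF₁,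
    integral_congr_Ioo_of_le hab hF₂, integral_congr_Ioo_of_le hbr hF₃]

end Piecewise

section InverseTranslate

variable {p q c : ℝ}

theorem intervalIntegrable_inv_add_of_pos (hp : 0 < p + c) (hq : 0 < q + c) :
    IntervalIntegrable (fun x => (x + c)⁻¹) volume p q :=
  intervalIntegrable_inv
    (fun x hx => by rcases min_le_iff.1 hx.1 with h | h <;> exact (by linarith : 0 < x + c).ne')
    (by fun_prop)

theorem integral_inv_add_of_pos (hp : 0 < p + c) (hq : 0 < q + c) :
    ∫ x in p..q, (x + c)⁻¹ = log (q + c) - log (p + c) := by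
  rw [integral_comp_add_right (fun x => x⁻¹), integral_inv_of_pos hp hq,
    log_div hq.ne' hp.ne']

end InverseTranslate

theorem integral_ite_inv_add {l a b r c d : ℝ} (hla : l ≤ a) (hab : a ≤ b) (hbr : b ≤ r)
    (hlc : 0 < l + c) (had : 0 < a + d) (ha : 0 < a + 1) :
    ∫ x in l..r, (if x < a then (x + c)⁻¹
      else if x < b then (x + c)⁻¹ + (x + d)⁻¹ - (x + 1)⁻¹ else (x + d)⁻¹) =
      (log (b + c) - log (b + 1)) - (log (a + d) - log (a + 1))
        + (log (r + d) - log (l + c)) := by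
  have hac : 0 < a + c := by linarith
  have hbc : 0 < b + c := by linarith
  have hbd : 0 < b + d := by linarith
  have hrd : 0 < r + d := by linarith
  have hb : 0 < b + 1 := by linarith
  have hc := intervalIntegrable_inv_add_of_pos hac hbc
  have hd := intervalIntegrable_inv_add_of_pos had hbd
  have h1 := intervalIntegrable_inv_add_of_pos ha hb
  rw [intervalIntegral_ite_ite hla hab hbr (intervalIntegrable_inv_add_of_pos hlc hac)
      ((hc.add hd).sub h1) (intervalIntegrable_inv_add_of_pos hbd hrd),
    integral_sub (hc.add hd) h1, integral_add hc hd, integral_inv_add_of_pos hlc hac,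
    integral_inv_add_of_pos hac hbc, integral_inv_add_of_pos had hbd,
    integral_inv_add_of_pos ha hb, integral_inv_add_of_pos hbd hrd]
  ring

theorem hDen_eq (α x : ℝ) :
    hDen α x = (3 * log φ)⁻¹ *
      (if x < (α - 1) / (2 - α) then (x + (φ + 1))⁻¹
       else if x < (1 - α) / α then (x + (φ + 1))⁻¹ + (x + (φ - 1))⁻¹ - (x + 1)⁻¹
       else (x + (φ - 1))⁻¹) := by
  simp only [hDen, goldenRatio, add_comm (√5) 1, one_div, add_assoc, add_sub_assoc]

section SquareEqSelfAddOne

variable {t α : ℝ}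

theorem div_add_add_one_of_sq_eq (ht : t ^ 2 = t + 1) (hα : α ≠ 0) :
    (1 - α) / α + (t + 1) = t * (α + (t - 1)) * ((1 - α) / α + 1) := by
  field_simp
  linear_combination -ht

theorem div_add_sub_one_of_sq_eq (ht : t ^ 2 = t + 1) (hα : 2 - α ≠ 0) :
    (α - 1) / (2 - α) + (t - 1) = (α + (t - 1)) / t ^ 2 * ((α - 1) / (2 - α) + 1) := by
  have ht₀ : t ≠ 0 := by rintro rfl; norm_num at ht
  field_simp
  linear_combination (α - 1 + (2 - α) * t) * ht

theorem sub_two_le_div_two_sub (hα : α < 2) : α - 2 ≤ (α - 1) / (2 - α) := by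
  rw [le_div_iff₀ (by linarith)]
  nlinarith [sq_nonneg (α - 3 / 2)]

theorem one_sub_div_le_self_of_sq_eq (ht : t ^ 2 = t + 1) (htα : t - 1 ≤ α) (ht₁ : 1 < t) :
    (1 - α) / α ≤ α := by
  rw [div_le_iff₀ (by linarith)]
  nlinarith [mul_le_mul htα htα (by linarith) (by linarith)]

end SquareEqSelfAddOne

/-- For g ≤ α ≤ 1 the density h_α integrates to 1 over I_α = [α−2, α). -/
theorem stmt8 (α : ℝ) (h1 : (Real.sqrt 5 - 1)/2 ≤ α) (h2 : α ≤ 1) :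
    ∫ x in (α-2)..α, hDen α x = 1 := by
  simp_rw [hDen_eq]
  rw [intervalIntegral.integral_const_mul]
  have hφα : φ - 1 ≤ α := by rw [goldenRatio]; linarith
  have hφ : 1 < φ := one_lt_goldenRatio
  have hα : 0 < α := by linarith
  have h2α : 0 < 2 - α := by linarith
  set a := (α - 1) / (2 - α)
  set b := (1 - α) / α
  have hs : 0 < α + (φ - 1) := by linarith
  have hla : α - 2 ≤ a := sub_two_le_div_two_sub (by linarith)
  have hab : a ≤ b :=
    (div_nonpos_of_nonpos_of_nonneg (by linarith) h2α.le).trans (div_nonneg (by linarith) hα.le)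
  have hbr : b ≤ α := one_sub_div_le_self_of_sq_eq goldenRatio_sq hφα hφ
  have ha : 0 < a + 1 := by rw [div_add_one h2α.ne']; exact div_pos (by linarith) h2α
  have hb : 0 < b + 1 := by linarith [div_nonneg (by linarith : (0 : ℝ) ≤ 1 - α) hα.le]
  have hbφ : b + (φ + 1) = φ * (α + (φ - 1)) * (b + 1) :=
    div_add_add_one_of_sq_eq goldenRatio_sq hα.ne'
  have haφ : a + (φ - 1) = (α + (φ - 1)) / φ ^ 2 * (a + 1) :=
    div_add_sub_one_of_sq_eq goldenRatio_sq h2α.ne'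
  have had : 0 < a + (φ - 1) := by rw [haφ]; exact mul_pos (by positivity) ha
  rw [integral_ite_inv_add hla hab hbr (by linarith) had ha, hbφ, haφ,
    show α - 2 + (φ + 1) = α + (φ - 1) by ring, log_mul (by positivity) hb.ne',
    log_mul (by positivity) hs.ne', log_mul (by positivity) ha.ne', log_div hs.ne' (by positivity), log_pow]
  have hlogφ : log φ ≠ 0 := (log_pos hφ).ne'
  field_simp
  ring
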